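/- arXiv:1306.6799 — 5 statements merged into one kernel-verified Lean document; each statement's English description precedes it below -/
import Mathlib

section
/- Let (X,d) be a compact metric space and f : X → X a continuous map. Then the set Per(f) of periodic points of f and the nonwandering set Ω(f) of f are both contained in the global attractor X_f := ⋂_{n≥1} f^n(X). (Here x is nonwandering if for every open neighborhood U of x there exists k ≥ 1 with f^k(U) ∩ U ≠ ∅.) -/
/-!
A periodic point `x = f^[k] x` equals `f^[m] (f^[k m - m] x)`, so it lies in every `range f^[m]`.
If `x ∉ range f^[m]`, this range is a compact, hence closed, set missing `x`, and no return time
`k ≥ m` can bring a point back into its complement. The finitely many return times `1 ≤ k < m`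
are excluded by Hausdorff separation, since `x` is not periodic. Together this gives an open
neighbourhood of `x` that never returns to itself, so `x` is wandering.
-/

open Filter Topology Function Set

theorem Function.IsPeriodicPt.mem_range_iterate {X : Type*} {f : X → X} {x : X} {k : ℕ}
    (hx : IsPeriodicPt f k x) (hk : 1 ≤ k) (m : ℕ) : x ∈ range f^[m] := by
  refine ⟨f^[k * m - m] x, ?_⟩
  rw [← iterate_add_apply, Nat.add_sub_cancel' (Nat.le_mul_of_pos_left m hk)]
  exact (hx.mul_const m).eq

theorem Function.image_iterate_subset_range_iterate {X : Type*} (f : X → X) (U : Set X)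
    {k m : ℕ} (hmk : m ≤ k) : f^[k] '' U ⊆ range f^[m] := by
  rintro _ ⟨y, -, rfl⟩
  exact ⟨f^[k - m] y, by rw [← iterate_add_apply, Nat.add_sub_cancel' hmk]⟩

theorem ContinuousAt.eventually_smallSets_disjoint_image_self {X : Type*} [TopologicalSpace X]
    [T2Space X] {g : X → X} {x : X} (hg : ContinuousAt g x) (hx : g x ≠ x) :
    ∀ᶠ U in (𝓝 x).smallSets, Disjoint (g '' U) U := by
  obtain ⟨V, W, hV, hW, hVW⟩ := t2_separation_nhds hx
  refine eventually_smallSets.2 ⟨W ∩ g ⁻¹' V, inter_mem hW (hg hV), fun U hU => ?_⟩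
  exact hVW.mono (image_subset_iff.2 fun y hy => (hU hy).2) fun y hy => (hU hy).1

theorem exists_isOpen_disjoint_image_iterate_of_notMem_range_iterate {X : Type*}
    [TopologicalSpace X] [CompactSpace X] [T2Space X] {f : X → X} (hf : Continuous f) {x : X}
    {m : ℕ} (hx : x ∉ range f^[m]) :
    ∃ U, IsOpen U ∧ x ∈ U ∧ ∀ k, 1 ≤ k → Disjoint (f^[k] '' U) U := by
  have hshort : ∀ᶠ U in (𝓝 x).smallSets, ∀ k ∈ Finset.Ico 1 m, Disjoint (f^[k] '' U) U :=
    (eventually_all_finset _).2 fun k hk =>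
      (hf.iterate k).continuousAt.eventually_smallSets_disjoint_image_self fun hper =>
        hx (IsPeriodicPt.mem_range_iterate hper (Finset.mem_Ico.1 hk).1 m)
  have hlong : ∀ᶠ U in (𝓝 x).smallSets, U ⊆ (range f^[m])ᶜ :=
    eventually_smallSets_subset.2 <|
      (isCompact_range (hf.iterate m)).isClosed.isOpen_compl.mem_nhds hx
  obtain ⟨t, ht, htU⟩ := eventually_smallSets.1 (hshort.and hlong)
  obtain ⟨hshortU, hlongU⟩ := htU _ interior_subset
  refine ⟨interior t, isOpen_interior, mem_interior_iff_mem_nhds.2 ht, fun k hk => ?_⟩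
  rcases lt_or_ge k m with hkm | hmk
  · exact hshortU k (Finset.mem_Ico.2 ⟨hk, hkm⟩)
  · exact disjoint_compl_right.mono (image_iterate_subset_range_iterate f _ hmk) hlongU

/-- For a continuous map `f` of a compact metric space `X`, the set of
periodic points and the nonwandering set are contained in the global attractor
`X_f = ⋂_{n ≥ 1} f^n(X)`. -/
theorem periodic_and_nonwandering_subset_attractor {X : Type*} [MetricSpace X]
    [CompactSpace X] (f : X → X) (hf : Continuous f) :
    (∀ x : X, (∃ k : ℕ, 1 ≤ k ∧ f^[k] x = x) → x ∈ ⋂ n : ℕ, f^[n + 1] '' Set.univ) ∧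
    (∀ x : X, (∀ U : Set X, IsOpen U → x ∈ U → ∃ k : ℕ, 1 ≤ k ∧ (f^[k] '' U ∩ U).Nonempty) →
      x ∈ ⋂ n : ℕ, f^[n + 1] '' Set.univ) := by
  simp only [image_univ, mem_iInter]
  refine ⟨fun x ⟨k, hk, hx⟩ n => IsPeriodicPt.mem_range_iterate hx hk (n + 1), ?_⟩
  intro x hx n
  by_contra hxn
  obtain ⟨U, hUo, hxU, hU⟩ := exists_isOpen_disjoint_image_iterate_of_notMem_range_iterate hf hxn
  obtain ⟨k, hk, hkU⟩ := hx U hUo hxU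
  exact hkU.ne_empty (hU k hk).inter_eq
end

section
/- Let (M,d) be a compact metric space and μ a Borel probability measure on M of full support (every nonempty open subset of M has positive μ-measure). Let μ̃ := ⨂_{n∈ℤ} μ be the product probability measure on M^ℤ. Then for every s > 0, the infimum over x ∈ M^ℤ of μ̃({y ∈ M^ℤ : d_1(x,y) < s}) is strictly positive. -/
open MeasureTheory

/-- The metric `d₁` on `M^ℤ`: `d₁(x,y) = Σ_{n ∈ ℤ} d(x_n, y_n) / 2^{|n|}`. -/
noncomputable def d1 {M : Type*} [PseudoMetricSpace M] (x y : ℤ → M) : ℝ :=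
  ∑' n : ℤ, dist (x n) (y n) / 2 ^ n.natAbs

/-!
Only finitely many coordinates matter. Since `M` is bounded, the part of the series defining `d₁`
outside a finite window `F ⊆ ℤ` is uniformly below `s / 2`, so for a suitable `ε > 0` the cylinder
`{y | ∀ i ∈ F, d(x_i, y_i) < ε}` lies in the `d₁`-ball of radius `s` about `x`. That cylinder has
`μ̃`-measure `∏_{i ∈ F} μ(B(x_i, ε))`, and a finite `ε/2`-net of the compact space `M` together with
full support gives a `c > 0` with `c ≤ μ(B(z, ε))` for every `z`; hence every ball has measure at
least `c ^ |F|`.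
-/

open Metric

theorem exists_pos_forall_le_measure_ball {M : Type*} [PseudoMetricSpace M] [CompactSpace M]
    [MeasurableSpace M] (μ : Measure M) [μ.IsOpenPosMeasure] {ε : ℝ} (hε : 0 < ε) :
    ∃ c > 0, ∀ x : M, c ≤ μ (ball x ε) := by
  obtain ⟨t, -, hcover⟩ := isCompact_univ.elim_nhds_subcover (fun z : M => ball z (ε / 2))
    fun z _ => ball_mem_nhds z (half_pos hε)
  refine ⟨t.inf fun z => μ (ball z (ε / 2)), ?_, fun x => ?_⟩
  · exact (Finset.lt_inf_iff ENNReal.zero_lt_top).2 fun z _ => measure_ball_pos μ z (half_pos hε)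
  · obtain ⟨z, hz, hxz⟩ := Set.mem_iUnion₂.1 (hcover (Set.mem_univ x))
    refine (Finset.inf_le hz).trans (measure_mono fun v hv => ?_)
    rw [mem_ball] at hv hxz ⊢
    linarith [dist_triangle v z x, dist_comm x z]

theorem summable_div_two_pow_natAbs (C : ℝ) : Summable fun n : ℤ => C / 2 ^ n.natAbs := by
  have hnat : Summable fun n : ℕ => C / 2 ^ n := by
    simpa [div_eq_mul_inv, inv_pow] using summable_geometric_two.mul_left C
  exact .of_nat_of_neg (by simpa using hnat) (by simpa using hnat)

section BoundedSpace

variable {M : Type*} [PseudoMetricSpace M] [BoundedSpace M]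

theorem dist_div_two_pow_natAbs_le (x y : ℤ → M) (n : ℤ) :
    dist (x n) (y n) / 2 ^ n.natAbs ≤ diam (Set.univ : Set M) / 2 ^ n.natAbs := by
  gcongr
  exact dist_le_diam_of_mem (Bornology.isBounded_univ.2 ‹_›) trivial trivial

theorem summable_dist_div_two_pow_natAbs (x y : ℤ → M) :
    Summable fun n : ℤ => dist (x n) (y n) / 2 ^ n.natAbs :=
  .of_nonneg_of_le (fun _ => by positivity) (dist_div_two_pow_natAbs_le x y)
    (summable_div_two_pow_natAbs _)

theorem exists_finset_d1_lt_of_forall_dist_lt {s : ℝ} (hs : 0 < s) :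
    ∃ (F : Finset ℤ) (ε : ℝ), 0 < ε ∧
      ∀ x y : ℤ → M, (∀ i ∈ F, dist (x i) (y i) < ε) → d1 x y < s := by
  set g : ℤ → ℝ := fun n => diam (Set.univ : Set M) / 2 ^ n.natAbs
  obtain ⟨F, hF⟩ : ∃ F : Finset ℤ, ∑' n : {n : ℤ // n ∉ F}, g n < s / 2 :=
    ((tendsto_order.1 (tendsto_tsum_compl_atTop_zero g)).2 _ (half_pos hs)).exists
  refine ⟨F, s / (2 * (F.card + 1)), by positivity, fun x y hxy => ?_⟩
  have hhead : ∑ i ∈ F, dist (x i) (y i) / 2 ^ i.natAbs < s / 2 := calc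
    ∑ i ∈ F, dist (x i) (y i) / 2 ^ i.natAbs ≤ ∑ _i ∈ F, s / (2 * (F.card + 1)) :=
      Finset.sum_le_sum fun i hi =>
        (div_le_self dist_nonneg (one_le_pow₀ one_le_two)).trans (hxy i hi).le
    _ = s / 2 * (F.card / (F.card + 1)) := by
      rw [Finset.sum_const, nsmul_eq_mul]; field_simp
    _ < s / 2 :=
      mul_lt_of_lt_one_right (half_pos hs) ((div_lt_one (by positivity)).2 (by linarith))
  have htail : ∑' n : {n : ℤ // n ∉ F}, dist (x n) (y n) / 2 ^ (n : ℤ).natAbs < s / 2 :=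
    (Summable.tsum_le_tsum (fun n : {n : ℤ // n ∉ F} => dist_div_two_pow_natAbs_le x y n)
      ((summable_dist_div_two_pow_natAbs x y).subtype _)
      ((summable_div_two_pow_natAbs _).subtype _)).trans_lt hF
  rw [d1, ← (summable_dist_div_two_pow_natAbs x y).sum_add_tsum_compl (s := F)]
  exact (add_lt_add hhead htail).trans_eq (add_halves s)

end BoundedSpace

theorem product_measure_d1_balls_uniformly_positive_general
    {M : Type*} [MetricSpace M] [CompactSpace M] [MeasurableSpace M] [BorelSpace M]
    (μ : Measure M)
    (hsupp : ∀ U : Set M, IsOpen U → U.Nonempty → 0 < μ U)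
    (μt : Measure (ℤ → M))
    (hprod : ∀ (s : Finset ℤ) (A : ℤ → Set M), (∀ i ∈ s, MeasurableSet (A i)) →
      μt {y | ∀ i ∈ s, y i ∈ A i} = ∏ i ∈ s, μ (A i))
    (s : ℝ) (hs : 0 < s) :
    0 < ⨅ x : ℤ → M, μt {y | d1 x y < s} := by
  have : μ.IsOpenPosMeasure := ⟨fun U hU hne => (hsupp U hU hne).ne'⟩
  obtain ⟨F, ε, hε, hF⟩ := exists_finset_d1_lt_of_forall_dist_lt (M := M) hs
  obtain ⟨c, hc, hball⟩ := exists_pos_forall_le_measure_ball μ hε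
  refine (ENNReal.pow_pos hc F.card).trans_le (le_iInf fun x => ?_)
  calc c ^ F.card = ∏ _i ∈ F, c := (Finset.prod_const c).symm
    _ ≤ ∏ i ∈ F, μ (ball (x i) ε) := Finset.prod_le_prod' fun i _ => hball (x i)
    _ = μt {y | ∀ i ∈ F, y i ∈ ball (x i) ε} :=
      (hprod F _ fun i _ => measurableSet_ball).symm
    _ ≤ μt {y | d1 x y < s} :=
      measure_mono fun y hy => hF x y fun i hi => by simpa [dist_comm] using hy i hi

/-- Let `(M,d)` be a compact metric space and `μ` a Borel probability measure
on `M` of full support.  Let `μ̃` be the product probability measure `⨂_{n ∈ ℤ} μ` on `M^ℤ`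
(characterized by its values on cylinders).  Then for every `s > 0`, the infimum over
`x ∈ M^ℤ` of `μ̃ {y : d₁(x,y) < s}` is strictly positive. -/
theorem product_measure_d1_balls_uniformly_positive
    {M : Type*} [MetricSpace M] [CompactSpace M] [MeasurableSpace M] [BorelSpace M]
    (μ : Measure M) [IsProbabilityMeasure μ]
    (hsupp : ∀ U : Set M, IsOpen U → U.Nonempty → 0 < μ U)
    (μt : Measure (ℤ → M)) [IsProbabilityMeasure μt]
    (hprod : ∀ (s : Finset ℤ) (A : ℤ → Set M), (∀ i ∈ s, MeasurableSet (A i)) →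
      μt {y | ∀ i ∈ s, y i ∈ A i} = ∏ i ∈ s, μ (A i))
    (s : ℝ) (hs : 0 < s) :
    0 < ⨅ x : ℤ → M, μt {y | d1 x y < s} :=
  product_measure_d1_balls_uniformly_positive_general μ hsupp μt hprod s hs
end

section
/- Let (M,d) be a compact metric space, μ a Borel probability measure on M of full support, and μ̃ := ⨂_{n∈ℤ} μ the product probability measure on M^ℤ. Let ρ : ℝ → ℝ be a smooth nonnegative function with support contained in (−1,1) and ρ(0) > 0. Then for every r > 0 there exists c > 0 such that the function 1̃_r(x) := ∫_{M^ℤ} ρ(d_1(x,y)/r) dμ̃(y) satisfies 1̃_r(x) ≥ c for every x ∈ M^ℤ. -/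
open MeasureTheory Metric

lemma geo_summable : Summable (fun n : ℤ => (1/2 : ℝ) ^ n.natAbs) := by
  apply Summable.of_nat_of_neg <;>
    simpa using summable_geometric_of_lt_one (by norm_num : (0:ℝ) ≤ 1/2) (by norm_num)

lemma uniform_ball_measure {M : Type*} [MetricSpace M] [CompactSpace M] [Nonempty M]
    [MeasurableSpace M] (μ : Measure M)
    (hsupp : ∀ U : Set M, IsOpen U → U.Nonempty → 0 < μ U) {δ : ℝ} (hδ : 0 < δ) :
    ∃ m : ENNReal, 0 < m ∧ ∀ x : M, m ≤ μ (Metric.ball x δ) := by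
  obtain ⟨t, ht⟩ := isCompact_univ.elim_finite_subcover (fun z : M => Metric.ball z (δ/2))
    (fun z => isOpen_ball) (fun x _ => Set.mem_iUnion.2 ⟨x, mem_ball_self (by linarith)⟩)
  have htne : t.Nonempty := by
    rcases Set.mem_iUnion₂.1 (ht (Set.mem_univ (Classical.arbitrary M))) with ⟨z, hz, _⟩
    exact ⟨z, hz⟩
  refine ⟨t.inf' htne (fun z => μ (Metric.ball z (δ/2))), ?_, ?_⟩
  · rw [Finset.lt_inf'_iff]
    exact fun z _ => hsupp _ isOpen_ball ⟨z, mem_ball_self (by linarith)⟩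
  · intro x
    rcases Set.mem_iUnion₂.1 (ht (Set.mem_univ x)) with ⟨z, hz, hxz⟩
    calc t.inf' htne (fun z => μ (Metric.ball z (δ/2))) ≤ μ (Metric.ball z (δ/2)) :=
          Finset.inf'_le _ hz
      _ ≤ μ (Metric.ball x δ) := by
          apply measure_mono
          apply ball_subset_ball'
          have : dist z x < δ/2 := by rwa [dist_comm, ← mem_ball]
          linarith

set_option maxHeartbeats 1600000 in
/-- Let `(M,d)` be a compact metric space, `μ` a Borel probability measure on
`M` of full support, `μ̃ = ⨂_{n ∈ ℤ} μ` the product probability measure on `M^ℤ`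
(characterized by its values on cylinders), and `ρ : ℝ → ℝ` a smooth nonnegative bump
function with support in `(-1,1)` and `ρ(0) > 0`.  Then for every `r > 0` there is `c > 0`
such that `1̃_r(x) = ∫ ρ(d₁(x,y)/r) dμ̃(y) ≥ c` for every `x ∈ M^ℤ`. -/
theorem convolution_of_one_uniformly_positive
    {M : Type*} [MetricSpace M] [CompactSpace M] [MeasurableSpace M] [BorelSpace M]
    (μ : Measure M) [IsProbabilityMeasure μ]
    (hsupp : ∀ U : Set M, IsOpen U → U.Nonempty → 0 < μ U)
    (μt : Measure (ℤ → M)) [IsProbabilityMeasure μt]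
    (hprod : ∀ (s : Finset ℤ) (A : ℤ → Set M), (∀ i ∈ s, MeasurableSet (A i)) →
      μt {y | ∀ i ∈ s, y i ∈ A i} = ∏ i ∈ s, μ (A i))
    (ρ : ℝ → ℝ) (hρ : ContDiff ℝ (⊤ : ℕ∞) ρ) (hρnn : ∀ t, 0 ≤ ρ t)
    (hρsupp : Function.support ρ ⊆ Set.Ioo (-1 : ℝ) 1) (hρ0 : 0 < ρ 0)
    (r : ℝ) (hr : 0 < r) :
    ∃ c : ℝ, 0 < c ∧ ∀ x : ℤ → M, c ≤ ∫ y, ρ (d1 x y / r) ∂μt := by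
  classical
  haveI hMne : Nonempty M := by
    rcases isEmpty_or_nonempty M with h | h
    · exfalso
      have h1 : μ Set.univ = 1 := measure_univ
      rw [Set.univ_eq_empty_iff.2 h] at h1
      simp at h1
    · exact h
  set D := Metric.diam (Set.univ : Set M) with hDdef
  have hdistD : ∀ a b : M, dist a b ≤ D := fun a b =>
    Metric.dist_le_diam_of_mem isCompact_univ.isBounded trivial trivial
  have hD0 : 0 ≤ D := Metric.diam_nonneg
  have hu : Summable (fun n : ℤ => D / 2 ^ n.natAbs) := by
    have := geo_summable.mul_left D
    apply this.congr
    intro n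
    rw [div_pow, one_pow]
    ring
  have hsumm : ∀ x y : ℤ → M, Summable (fun n : ℤ => dist (x n) (y n) / 2 ^ n.natAbs) :=
    fun x y => Summable.of_nonneg_of_le (fun n => by positivity)
      (fun n => by gcongr; exact hdistD _ _) hu
  have hd1nn : ∀ x y : ℤ → M, 0 ≤ d1 x y :=
    fun x y => tsum_nonneg (fun n => by positivity)
  have hcont : ∀ x : ℤ → M, Continuous fun y : ℤ → M => d1 x y := by
    intro x
    apply continuous_tsum (u := fun n : ℤ => D / 2 ^ n.natAbs) ?_ hu ?_
    · intro n
      exact (continuous_const.dist (continuous_apply n)).div_const _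
    · intro n y
      rw [Real.norm_eq_abs, abs_of_nonneg (by positivity)]
      show dist (x n) (y n) / 2 ^ n.natAbs ≤ D / 2 ^ n.natAbs
      gcongr
      exact hdistD _ _
  -- ε such that ρ ≥ ρ 0 / 2 on (-ε, ε)
  obtain ⟨ε, hε, hρball⟩ : ∃ ε > 0, ∀ t : ℝ, |t| < ε → ρ 0 / 2 ≤ ρ t := by
    have hc := (hρ.continuous.continuousAt (x := 0))
    rw [Metric.continuousAt_iff] at hc
    obtain ⟨ε, hε, h⟩ := hc (ρ 0 / 2) (by linarith)
    refine ⟨ε, hε, fun t ht => ?_⟩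
    have h2 := h (x := t) (by simpa [Real.dist_eq] using ht)
    rw [Real.dist_eq] at h2
    have h3 := abs_lt.1 h2
    linarith [h3.1]
  set δ := ε * r with hδdef
  have hδ : 0 < δ := mul_pos hε hr
  obtain ⟨F, hF⟩ : ∃ F : Finset ℤ, ∑' n : {n : ℤ // n ∉ F}, D / 2 ^ (n : ℤ).natAbs < δ / 2 := by
    have h := tendsto_tsum_compl_atTop_zero (fun n : ℤ => D / 2 ^ n.natAbs)
    exact (h.eventually (gt_mem_nhds (by positivity : (0:ℝ) < δ / 2))).exists
  set k := F.card with hkdef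
  set δ' := δ / (2 * (k + 1)) with hδ'def
  have hδ' : 0 < δ' := by positivity
  obtain ⟨m, hm, hmball⟩ := uniform_ball_measure μ hsupp hδ'
  have hm1 : m ≠ ⊤ := by
    intro h
    have := (hmball (Classical.arbitrary M)).trans (prob_le_one)
    rw [h] at this
    exact absurd (top_le_iff.1 this) (by simp)
  refine ⟨(ρ 0 / 2) * (m ^ k).toReal, by
    have : 0 < (m ^ k).toReal :=
      ENNReal.toReal_pos (pow_ne_zero _ hm.ne') (ENNReal.pow_ne_top hm1)
    positivity, ?_⟩
  intro x
  set S : Set (ℤ → M) := {y | ∀ i ∈ F, y i ∈ Metric.ball (x i) δ'} with hSdef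
  have hSmeas : MeasurableSet S := by
    have : S = ⋂ i ∈ F, (fun y : ℤ → M => y i) ⁻¹' Metric.ball (x i) δ' := by
      ext y; simp [hSdef]
    rw [this]
    exact MeasurableSet.biInter F.countable_toSet
      (fun i _ => (measurable_pi_apply i) measurableSet_ball)
  have hμtS : (m : ENNReal) ^ k ≤ μt S := by
    rw [hprod F (fun i => Metric.ball (x i) δ') (fun i _ => measurableSet_ball)]
    calc (m : ENNReal) ^ k = ∏ _i ∈ F, m := by rw [Finset.prod_const, hkdef]
      _ ≤ ∏ i ∈ F, μ (Metric.ball (x i) δ') :=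
        Finset.prod_le_prod' (fun i _ => hmball (x i))
  -- d1 bound on S
  have hd1lt : ∀ y ∈ S, d1 x y < δ := by
    intro y hy
    have hsx := hsumm x y
    have hsplit := Summable.sum_add_tsum_compl (s := F) hsx
    have h1 : ∑ i ∈ F, dist (x i) (y i) / 2 ^ i.natAbs ≤ δ / 2 := by
      have hterm : ∀ i ∈ F, dist (x i) (y i) / 2 ^ i.natAbs ≤ δ' := by
        intro i hi
        have h2 : dist (x i) (y i) < δ' := by
          have := hy i hi
          rwa [mem_ball, dist_comm] at this
        calc dist (x i) (y i) / 2 ^ i.natAbs ≤ dist (x i) (y i) :=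
            div_le_self dist_nonneg (one_le_pow₀ (by norm_num))
          _ ≤ δ' := h2.le
      calc ∑ i ∈ F, dist (x i) (y i) / 2 ^ i.natAbs ≤ ∑ _i ∈ F, δ' :=
            Finset.sum_le_sum hterm
        _ = (k : ℝ) * δ' := by rw [Finset.sum_const, nsmul_eq_mul, hkdef]
        _ ≤ ((k : ℝ) + 1) * δ' := by nlinarith
        _ = δ / 2 := by
            rw [hδ'def, mul_div_assoc', mul_comm (2:ℝ) ((k:ℝ)+1),
              mul_div_mul_left _ _ (by positivity : ((k:ℝ)+1) ≠ 0)]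
    have h2 : ∑' n : ↑((F : Set ℤ))ᶜ, dist (x (n : ℤ)) (y (n : ℤ)) / 2 ^ (n : ℤ).natAbs < δ / 2 := by
      refine lt_of_le_of_lt ?_ hF
      exact Summable.tsum_le_tsum (fun n => by gcongr; exact hdistD _ _)
        (hsx.subtype _) (hu.subtype _)
    have : d1 x y = ∑ i ∈ F, dist (x i) (y i) / 2 ^ i.natAbs
        + ∑' n : ↑((F : Set ℤ))ᶜ, dist (x (n : ℤ)) (y (n : ℤ)) / 2 ^ (n : ℤ).natAbs := by
      rw [d1, ← hsplit]
    rw [this]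
    linarith
  have hlower : ∀ y ∈ S, ρ 0 / 2 ≤ ρ (d1 x y / r) := by
    intro y hy
    apply hρball
    rw [abs_of_nonneg (div_nonneg (hd1nn x y) hr.le)]
    rw [div_lt_iff₀ hr]
    exact hd1lt y hy
  set f : (ℤ → M) → ℝ := fun y => ρ (d1 x y / r) with hfdef
  have hfc : Continuous f := hρ.continuous.comp ((hcont x).div_const r)
  have hfcs : HasCompactSupport f :=
    IsCompact.of_isClosed_subset isCompact_univ (isClosed_tsupport f) (Set.subset_univ _)
  have hfi : Integrable f μt := hfc.integrable_of_hasCompactSupport hfcs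
  calc (ρ 0 / 2) * (m ^ k).toReal ≤ (ρ 0 / 2) * (μt S).toReal := by
        apply mul_le_mul_of_nonneg_left _ (by linarith)
        exact ENNReal.toReal_le_toReal (ENNReal.pow_ne_top hm1) (measure_ne_top _ _) |>.2 hμtS
    _ ≤ ∫ y in S, f y ∂μt :=
        setIntegral_ge_of_const_le_real hSmeas (measure_ne_top _ _) hlower hfi.integrableOn
    _ ≤ ∫ y, f y ∂μt :=
        setIntegral_le_integral hfi (Filter.Eventually.of_forall (fun y => hρnn _))
end

section
/- Let (M,d) be a compact metric space, μ a Borel probability measure on M of full support, and μ̃ := ⨂_{n∈ℤ} μ the product probability measure on M^ℤ. Let ρ : ℝ → ℝ be a smooth nonnegative function with support contained in (−1,1) and ρ(0) > 0. Let φ : M^ℤ → ℝ^k be continuous for the metric d_1. Then for every ε > 0 there exists r₀ > 0 such that for every r ∈ (0, r₀], one has sup_{x∈M^ℤ} ‖φ_r(x)/1̃_r(x) − φ(x)‖ ≤ ε, where φ_r(x) := ∫ φ(y)·ρ(d_1(x,y)/r) dμ̃(y) and 1̃_r(x) := ∫ ρ(d_1(x,y)/r) dμ̃(y) (which is everywhere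 positive). -/
open MeasureTheory

section d1aux
variable {M : Type*} [PseudoMetricSpace M] {D : ℝ}

private lemma summable_w : Summable (fun n : ℤ => ((1:ℝ)/2) ^ n.natAbs) := by
  apply Summable.of_nat_of_neg <;>
  · simpa using summable_geometric_of_lt_one (by norm_num) (by norm_num : (1/2:ℝ) < 1)

private lemma term_eq (a b : M) (n : ℤ) :
    dist a b / 2 ^ n.natAbs = dist a b * ((1:ℝ)/2) ^ n.natAbs := by
  rw [div_eq_mul_inv, one_div, inv_pow]

private lemma d1_summable (hD : ∀ a b : M, dist a b ≤ D) (x y : ℤ → M) :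
    Summable (fun n : ℤ => dist (x n) (y n) / 2 ^ n.natAbs) := by
  apply Summable.of_nonneg_of_le (fun n => by positivity) (fun n => ?_) (summable_w.mul_left D)
  rw [term_eq]
  exact mul_le_mul_of_nonneg_right (hD _ _) (by positivity)

private lemma d1_nonneg (x y : ℤ → M) : 0 ≤ d1 x y :=
  tsum_nonneg (fun n => by positivity)

private lemma d1_self (x : ℤ → M) : d1 x x = 0 := by simp [d1]

private lemma d1_comm (x y : ℤ → M) : d1 x y = d1 y x := by simp [d1, dist_comm]

private lemma d1_triangle (hD : ∀ a b : M, dist a b ≤ D) (x y z : ℤ → M) :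
    d1 x z ≤ d1 x y + d1 y z := by
  rw [d1, d1, d1, ← Summable.tsum_add (d1_summable hD x y) (d1_summable hD y z)]
  refine Summable.tsum_le_tsum (fun n => ?_) (d1_summable hD x z)
    ((d1_summable hD x y).add (d1_summable hD y z))
  rw [← add_div]
  exact div_le_div_of_nonneg_right (dist_triangle _ _ _) (by positivity)

/-- cylinder lemma -/
private lemma exists_cylinder (hD : ∀ a b : M, dist a b ≤ D) {t : ℝ} (ht : 0 < t) :
    ∃ (s : Finset ℤ) (θ : ℝ), 0 < θ ∧
      ∀ x y : ℤ → M, (∀ n ∈ s, dist (x n) (y n) ≤ θ) → d1 x y < t := by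
  set K : ℝ := ∑' n : ℤ, ((1:ℝ)/2) ^ n.natAbs with hK
  have hK1 : (1:ℝ) ≤ K := by
    have h := Summable.le_tsum summable_w 0 (fun j _ => by positivity)
    rw [← hK] at h
    simpa using h
  have hKpos : 0 < K := lt_of_lt_of_le one_pos hK1
  have htail := (tendsto_order.1
    (tendsto_tsum_compl_atTop_zero (fun n : ℤ => D * ((1:ℝ)/2) ^ n.natAbs))).2 _
    (half_pos ht)
  obtain ⟨s, hs⟩ := htail.exists
  refine ⟨s, t / (2 * K), by positivity, fun x y hxy => ?_⟩
  have hDs : Summable (fun n : ℤ => dist (x n) (y n) / 2 ^ n.natAbs) := d1_summable hD x y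
  set θ := t / (2 * K) with hθ
  set c : ℤ → ℝ := Set.indicator {n : ℤ | n ∉ s} (fun n => D * ((1:ℝ)/2) ^ n.natAbs) with hc
  have hcs : Summable c := ((summable_w.mul_left D)).indicator _
  have hbs : Summable (fun n : ℤ => θ * ((1:ℝ)/2) ^ n.natAbs) := summable_w.mul_left θ
  have hle : ∀ n : ℤ, dist (x n) (y n) / 2 ^ n.natAbs ≤ θ * ((1:ℝ)/2) ^ n.natAbs + c n := by
    intro n
    rw [term_eq]
    by_cases hn : n ∈ s
    · have : c n = 0 := by simp [hc, hn]
      rw [this, add_zero]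
      exact mul_le_mul_of_nonneg_right (hxy n hn) (by positivity)
    · have : c n = D * ((1:ℝ)/2) ^ n.natAbs := by simp [hc, hn]
      rw [this]
      have h1 : dist (x n) (y n) * ((1:ℝ)/2) ^ n.natAbs ≤ D * ((1:ℝ)/2) ^ n.natAbs :=
        mul_le_mul_of_nonneg_right (hD _ _) (by positivity)
      have h2 : 0 ≤ θ * ((1:ℝ)/2) ^ n.natAbs := by positivity
      linarith
  have hsum : d1 x y ≤ θ * K + ∑' n, c n := by
    have h := Summable.tsum_le_tsum hle hDs (hbs.add hcs)
    rw [Summable.tsum_add hbs hcs, tsum_mul_left] at h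
    exact h
  have htail2 : ∑' n, c n < t / 2 := by
    have h := tsum_subtype {n : ℤ | n ∉ s} (fun n => D * ((1:ℝ)/2) ^ n.natAbs)
    rw [hc, ← h]
    exact hs
  have hθK : θ * K = t / 2 := by
    rw [hθ, div_mul_eq_mul_div, div_eq_div_iff (by positivity) (by norm_num)]
    ring
  linarith

/-- continuity of `d1 x ·` in the product topology -/
private lemma d1_continuous (hD : ∀ a b : M, dist a b ≤ D) (x : ℤ → M) :
    Continuous (fun y => d1 x y) := by
  rw [continuous_iff_continuousAt]
  intro y₀
  rw [ContinuousAt, Metric.tendsto_nhds]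
  intro ε hε
  obtain ⟨s, θ, hθ, hcyl⟩ := exists_cylinder hD hε
  have hU : {y : ℤ → M | ∀ n ∈ s, dist (y₀ n) (y n) < θ} ∈ nhds y₀ := by
    have hopen : IsOpen {y : ℤ → M | ∀ n ∈ s, dist (y₀ n) (y n) < θ} := by
      have : {y : ℤ → M | ∀ n ∈ s, dist (y₀ n) (y n) < θ}
          = ⋂ n ∈ s, (fun y : ℤ → M => y n) ⁻¹' {z | dist (y₀ n) z < θ} := by
        ext y; simp
      rw [this]
      refine isOpen_biInter_finset (fun n _ => ?_)
      exact (isOpen_lt (continuous_const.dist continuous_id) continuous_const).preimage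
        (continuous_apply n)
    exact hopen.mem_nhds (by simp [hθ])
  filter_upwards [hU] with y hy
  have h1 : d1 y₀ y < ε := hcyl y₀ y (fun n hn => (hy n hn).le)
  have t1 : d1 x y ≤ d1 x y₀ + d1 y₀ y := d1_triangle hD x y₀ y
  have t2 : d1 x y₀ ≤ d1 x y + d1 y y₀ := d1_triangle hD x y y₀
  rw [d1_comm y y₀] at t2
  rw [Real.dist_eq, abs_lt]
  constructor <;> linarith

end d1aux

/-- Let `(M,d)` be a compact metric space, `μ` a Borel probability measure of
full support, `μ̃ = ⨂_{n ∈ ℤ} μ` the product probability measure on `M^ℤ` (characterized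
by its values on cylinders), and `ρ` a smooth nonnegative bump function with support in
`(-1,1)` and `ρ(0) > 0`.  If `φ : M^ℤ → ℝ^k` is continuous for `d₁`, then for every
`ε > 0` there is `r₀ > 0` such that for all `0 < r ≤ r₀` the normalizing factor
`1̃_r(x) = ∫ ρ(d₁(x,y)/r) dμ̃(y)` is everywhere positive and
`sup_x ‖φ_r(x)/1̃_r(x) − φ(x)‖ ≤ ε`, where `φ_r(x) = ∫ ρ(d₁(x,y)/r)·φ(y) dμ̃(y)`. -/
theorem normalized_convolution_uniformly_close
    {M : Type*} [MetricSpace M] [CompactSpace M] [MeasurableSpace M] [BorelSpace M]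
    (μ : Measure M) [IsProbabilityMeasure μ]
    (hsupp : ∀ U : Set M, IsOpen U → U.Nonempty → 0 < μ U)
    (μt : Measure (ℤ → M)) [IsProbabilityMeasure μt]
    (hprod : ∀ (s : Finset ℤ) (A : ℤ → Set M), (∀ i ∈ s, MeasurableSet (A i)) →
      μt {y | ∀ i ∈ s, y i ∈ A i} = ∏ i ∈ s, μ (A i))
    (ρ : ℝ → ℝ) (hρ : ContDiff ℝ (⊤ : ℕ∞) ρ) (hρnn : ∀ t, 0 ≤ ρ t)
    (hρsupp : Function.support ρ ⊆ Set.Ioo (-1 : ℝ) 1) (hρ0 : 0 < ρ 0)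
    {k : ℕ} (φ : (ℤ → M) → EuclideanSpace ℝ (Fin k))
    (hφc : ∀ x : ℤ → M, ∀ ε : ℝ, 0 < ε → ∃ δ : ℝ, 0 < δ ∧
      ∀ y : ℤ → M, d1 x y < δ → ‖φ y - φ x‖ < ε)
    (ε : ℝ) (hε : 0 < ε) :
    ∃ r₀ : ℝ, 0 < r₀ ∧ ∀ r : ℝ, 0 < r → r ≤ r₀ →
      (∀ x : ℤ → M, 0 < ∫ y, ρ (d1 x y / r) ∂μt) ∧
      ∀ x : ℤ → M,
        ‖(∫ y, ρ (d1 x y / r) ∂μt)⁻¹ • (∫ y, ρ (d1 x y / r) • φ y ∂μt) - φ x‖ ≤ ε := by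
  -- nonemptiness
  have hne : Nonempty (ℤ → M) := by
    by_contra h
    rw [not_nonempty_iff] at h
    have h1 := measure_univ (μ := μt)
    rw [Set.univ_eq_empty_iff.mpr h, measure_empty] at h1
    exact zero_ne_one h1
  -- a uniform bound on distances in M
  obtain ⟨D₀, hD₀⟩ := Metric.isBounded_iff.1 (isCompact_univ (X := M)).isBounded
  set D : ℝ := max D₀ 0 with hDdef
  have hD : ∀ a b : M, dist a b ≤ D :=
    fun a b => le_trans (hD₀ (Set.mem_univ a) (Set.mem_univ b)) (le_max_left _ _)
  -- continuity of φ in the product topology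
  have hφcont : Continuous φ := by
    rw [continuous_iff_continuousAt]
    intro x
    rw [ContinuousAt, Metric.tendsto_nhds]
    intro e he
    obtain ⟨δ, hδ, hδ2⟩ := hφc x e he
    obtain ⟨s, θ, hθ, hcyl⟩ := exists_cylinder hD hδ
    have hU : {y : ℤ → M | ∀ n ∈ s, dist (x n) (y n) < θ} ∈ nhds x := by
      have hopen : IsOpen {y : ℤ → M | ∀ n ∈ s, dist (x n) (y n) < θ} := by
        have : {y : ℤ → M | ∀ n ∈ s, dist (x n) (y n) < θ}
            = ⋂ n ∈ s, (fun y : ℤ → M => y n) ⁻¹' {z | dist (x n) z < θ} := by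
          ext y; simp
        rw [this]
        refine isOpen_biInter_finset (fun n _ => ?_)
        exact (isOpen_lt (continuous_const.dist continuous_id) continuous_const).preimage
          (continuous_apply n)
      exact hopen.mem_nhds (by simp [hθ])
    filter_upwards [hU] with y hy
    rw [dist_eq_norm]
    exact hδ2 y (hcyl x y (fun n hn => (hy n hn).le))
  -- uniform continuity of φ w.r.t. d1
  have hunif : ∀ e : ℝ, 0 < e → ∃ δ : ℝ, 0 < δ ∧
      ∀ x y : ℤ → M, d1 x y < δ → ‖φ y - φ x‖ < e := by
    intro e he
    choose δf hδf hδf2 using fun x => hφc x (e/2) (half_pos he)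
    set U : (ℤ → M) → Set (ℤ → M) := fun x => {y | d1 x y < δf x / 2} with hUdef
    have hopen : ∀ x, IsOpen (U x) :=
      fun x => isOpen_lt (d1_continuous hD x) continuous_const
    have hcover : (Set.univ : Set (ℤ → M)) ⊆ ⋃ x, U x := by
      intro x _
      exact Set.mem_iUnion.2 ⟨x, by simp [hUdef, d1_self, half_pos (hδf x)]⟩
    obtain ⟨t, ht⟩ := isCompact_univ.elim_finite_subcover U hopen hcover
    obtain ⟨x₀⟩ := hne
    have htne : t.Nonempty := by
      obtain ⟨z, hz, -⟩ := Set.mem_iUnion₂.1 (ht (Set.mem_univ x₀))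
      exact ⟨z, hz⟩
    refine ⟨t.inf' htne (fun x => δf x / 2), ?_, ?_⟩
    · rw [Finset.lt_inf'_iff]
      exact fun x _ => half_pos (hδf x)
    · intro x y hxy
      obtain ⟨z, hz, hxz⟩ := Set.mem_iUnion₂.1 (ht (Set.mem_univ x))
      have hzx : d1 z x < δf z / 2 := hxz
      have hinf : t.inf' htne (fun x => δf x / 2) ≤ δf z / 2 := Finset.inf'_le _ hz
      have hzy : d1 z y < δf z :=
        lt_of_le_of_lt (d1_triangle hD z x y) (by linarith)
      have h1 := hδf2 z y hzy
      have h2 := hδf2 z x (by linarith [hzx, hδf z])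
      calc ‖φ y - φ x‖ = ‖(φ y - φ z) - (φ x - φ z)‖ := by abel_nf
        _ ≤ ‖φ y - φ z‖ + ‖φ x - φ z‖ := norm_sub_le _ _
        _ < e := by linarith
  -- a bound on ρ
  obtain ⟨Cρ, hCρ⟩ : ∃ C : ℝ, ∀ t, |ρ t| ≤ C := by
    obtain ⟨C, hC⟩ := (isCompact_Icc (a := (-1:ℝ)) (b := 1)).exists_bound_of_continuousOn
      hρ.continuous.continuousOn
    refine ⟨C, fun t => ?_⟩
    by_cases h : t ∈ Set.Icc (-1:ℝ) 1
    · simpa using hC t h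
    · have : ρ t = 0 := by
        by_contra h0
        exact h (Set.Ioo_subset_Icc_self (hρsupp h0))
      rw [this, abs_zero]
      exact le_trans (abs_nonneg (ρ 0)) (by simpa using hC 0 (by norm_num))
  -- a bound on φ
  obtain ⟨Cφ, hCφ⟩ : ∃ C : ℝ, ∀ y, ‖φ y‖ ≤ C := by
    obtain ⟨y₀, -, hy₀⟩ := isCompact_univ.exists_isMaxOn Set.univ_nonempty
      (continuous_norm.comp hφcont).continuousOn
    exact ⟨‖φ y₀‖, fun y => hy₀ (Set.mem_univ y)⟩
  -- integrability
  have hint1 : ∀ (x : ℤ → M) (r : ℝ), 0 < r →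
      Integrable (fun y => ρ (d1 x y / r)) μt := by
    intro x r hr
    refine Integrable.mono' (integrable_const Cρ)
      ((hρ.continuous.comp ((d1_continuous hD x).div_const r)).aestronglyMeasurable)
      (Filter.Eventually.of_forall (fun y => ?_))
    exact hCρ _
  have hint2 : ∀ (x : ℤ → M) (r : ℝ), 0 < r →
      Integrable (fun y => ρ (d1 x y / r) • φ y) μt := by
    intro x r hr
    refine Integrable.mono' (integrable_const (Cρ * Cφ))
      (((hρ.continuous.comp ((d1_continuous hD x).div_const r)).smul hφcont).aestronglyMeasurable)
      (Filter.Eventually.of_forall (fun y => ?_))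
    rw [norm_smul, Real.norm_eq_abs]
    exact mul_le_mul (hCρ _) (hCφ _) (norm_nonneg _)
      (le_trans (abs_nonneg _) (hCρ 0))
  -- positivity of balls
  have hball : ∀ (x : ℤ → M) (s : ℝ), 0 < s → 0 < μt {y | d1 x y < s} := by
    intro x s hs
    obtain ⟨s₀, θ, hθ, hcyl⟩ := exists_cylinder hD hs
    have hmeas : ∀ i ∈ s₀, MeasurableSet (Metric.ball (x i) θ) :=
      fun i _ => measurableSet_ball
    have hcylval := hprod s₀ (fun i => Metric.ball (x i) θ) hmeas
    have hsub : {y : ℤ → M | ∀ i ∈ s₀, y i ∈ Metric.ball (x i) θ} ⊆ {y | d1 x y < s} := by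
      intro y hy
      exact hcyl x y (fun n hn => by
        have := hy n hn
        rw [Metric.mem_ball, dist_comm] at this
        exact this.le)
    calc (0:ENNReal) < ∏ i ∈ s₀, μ (Metric.ball (x i) θ) :=
          CanonicallyOrderedAdd.prod_pos.2 (fun i _ => hsupp _ Metric.isOpen_ball
            ⟨x i, Metric.mem_ball_self hθ⟩)
      _ = μt {y : ℤ → M | ∀ i ∈ s₀, y i ∈ Metric.ball (x i) θ} := hcylval.symm
      _ ≤ μt {y | d1 x y < s} := measure_mono hsub
  -- positivity of the normalizing integral
  have hpos : ∀ (x : ℤ → M) (r : ℝ), 0 < r → 0 < ∫ y, ρ (d1 x y / r) ∂μt := by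
    intro x r hr
    obtain ⟨η, hη, hη2⟩ := Metric.continuousAt_iff.1
      (hρ.continuous.continuousAt (x := (0:ℝ))) (ρ 0 / 2) (half_pos hρ0)
    set A : Set (ℤ → M) := {y | d1 x y < η * r} with hA
    have hAmeas : MeasurableSet A :=
      (isOpen_lt (d1_continuous hD x) continuous_const).measurableSet
    have hApos : 0 < μt A := hball x (η * r) (by positivity)
    have hptwise : ∀ y, A.indicator (fun _ => ρ 0 / 2) y ≤ ρ (d1 x y / r) := by
      intro y
      by_cases hy : y ∈ A
      · rw [Set.indicator_of_mem hy]
        have hd : d1 x y / r < η := by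
          rw [div_lt_iff₀ hr]
          exact hy
        have habs : dist (d1 x y / r) 0 < η := by
          rw [Real.dist_eq, sub_zero, abs_of_nonneg (div_nonneg (d1_nonneg x y) hr.le)]
          exact hd
        have := hη2 habs
        rw [Real.dist_eq] at this
        have := abs_lt.1 this
        linarith [this.1]
      · rw [Set.indicator_of_notMem hy]
        exact hρnn _
    have hIind : Integrable (A.indicator (fun _ : ℤ → M => ρ 0 / 2)) μt :=
      (integrable_const (ρ 0 / 2)).indicator hAmeas
    have hle := integral_mono hIind (hint1 x r hr) hptwise
    rw [integral_indicator_const _ hAmeas] at hle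
    have htoReal : 0 < (μt A).toReal :=
      ENNReal.toReal_pos hApos.ne' (measure_ne_top μt A)
    calc (0:ℝ) < (μt A).toReal • (ρ 0 / 2) := by
          rw [smul_eq_mul]; positivity
      _ ≤ _ := hle
  -- conclusion
  obtain ⟨δ, hδ, hδ2⟩ := hunif ε hε
  refine ⟨δ, hδ, fun r hr hrδ => ⟨fun x => hpos x r hr, fun x => ?_⟩⟩
  set N : ℝ := ∫ y, ρ (d1 x y / r) ∂μt with hNdef
  have hN : 0 < N := hpos x r hr
  have hint3 : Integrable (fun y => ρ (d1 x y / r) * ‖φ y - φ x‖) μt := by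
    refine Integrable.mono' (integrable_const (Cρ * (Cφ + Cφ)))
      (((hρ.continuous.comp ((d1_continuous hD x).div_const r)).mul
        ((hφcont.sub continuous_const).norm)).aestronglyMeasurable)
      (Filter.Eventually.of_forall (fun y => ?_))
    rw [Real.norm_eq_abs, abs_mul, abs_of_nonneg (norm_nonneg _)]
    refine mul_le_mul (hCρ _) ?_ (norm_nonneg _) (le_trans (abs_nonneg _) (hCρ 0))
    exact le_trans (norm_sub_le _ _) (add_le_add (hCφ _) (hCφ _))
  have hkey : (∫ y, ρ (d1 x y / r) • φ y ∂μt) - N • φ x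
      = ∫ y, ρ (d1 x y / r) • (φ y - φ x) ∂μt := by
    rw [hNdef, ← integral_smul_const (fun y => ρ (d1 x y / r)) (φ x),
      ← integral_sub (hint2 x r hr) ((hint1 x r hr).smul_const (φ x))]
    congr 1
    funext y
    rw [smul_sub]
  have hrewrite : (∫ y, ρ (d1 x y / r) ∂μt)⁻¹ • (∫ y, ρ (d1 x y / r) • φ y ∂μt) - φ x
      = N⁻¹ • ((∫ y, ρ (d1 x y / r) • φ y ∂μt) - N • φ x) := by
    rw [smul_sub, smul_smul, inv_mul_cancel₀ hN.ne', one_smul, ← hNdef]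
  rw [hrewrite, hkey, norm_smul, Real.norm_eq_abs, abs_of_nonneg (inv_nonneg.2 hN.le)]
  have hbound : ‖∫ y, ρ (d1 x y / r) • (φ y - φ x) ∂μt‖ ≤ ε * N := by
    refine le_trans (norm_integral_le_integral_norm _) ?_
    have heq : (fun y => ‖ρ (d1 x y / r) • (φ y - φ x)‖)
        = fun y => ρ (d1 x y / r) * ‖φ y - φ x‖ := by
      funext y
      rw [norm_smul, Real.norm_eq_abs, abs_of_nonneg (hρnn _)]
    rw [heq]
    have hmono : ∀ y, ρ (d1 x y / r) * ‖φ y - φ x‖ ≤ ρ (d1 x y / r) * ε := by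
      intro y
      by_cases h0 : ρ (d1 x y / r) = 0
      · rw [h0, zero_mul, zero_mul]
      · refine mul_le_mul_of_nonneg_left ?_ (hρnn _)
        have hmem := hρsupp h0
        have hd1 : d1 x y / r < 1 := hmem.2
        have : d1 x y < r := by
          rwa [div_lt_one hr] at hd1
        exact (hδ2 x y (lt_of_lt_of_le this hrδ)).le
    calc ∫ y, ρ (d1 x y / r) * ‖φ y - φ x‖ ∂μt
        ≤ ∫ y, ρ (d1 x y / r) * ε ∂μt :=
          integral_mono hint3 ((hint1 x r hr).mul_const ε) hmono
      _ = N * ε := by rw [integral_mul_const, hNdef]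
      _ = ε * N := mul_comm _ _
  calc N⁻¹ * ‖∫ y, ρ (d1 x y / r) • (φ y - φ x) ∂μt‖
      ≤ N⁻¹ * (ε * N) := mul_le_mul_of_nonneg_left hbound (inv_nonneg.2 hN.le)
    _ = ε := by field_simp
end

section
/- Let E be a real Banach space, T : E → E a continuous linear map, and suppose E = F ⊕ G where F and G are closed subspaces with continuous projections π_F, π_G (π_F + π_G = id, π_F with range F and kernel G, π_G with range G and kernel F), such that T(F) ⊆ F, T(G) ⊆ G, the restriction T|_G : G → G is bijective, and there exist constants D > 0 and λ ∈ (0,1) with ‖T^n(v)‖ ≤ D·λ^n·‖v‖ for all v ∈ F and n ≥ 0, and ‖(T|_G)^{-n}(v)‖ ≤ D·λ^n·‖v‖ for all v ∈ G and n ≥ 0. Then the operator J : E → E defined by J(v) := −Σ_{n≥0} T^n(π_F(v)) + Σ_{n≥1} (T|_G)^{-n}(π_G(v)) is a well-defined continuous linear map satisfying (T − id) ∘ J = id and J ∘ (T − id) = id; in particular T − id is a continuous linear equivalence, and ‖J‖ ≤ 2·C·D/(1−λ) where C := max(‖π_F‖, ‖π_G‖). -/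
/-!
On `F` the operator `T - 1` is inverted by the Neumann-type series `-∑ Tⁿ`, and on `G`, where
`T - 1 = T (1 - T|_G⁻¹)`, by `∑_{n ≥ 1} T|_G⁻ⁿ`; both series converge in operator norm because of
the geometric decay, and applying `T` to either one shifts it by one term, which gives
`(T - 1) J = 1`. A fixed vector of `T` has fixed `F`- and `G`-components (`T` commutes with the
projections), and the decay forces both to vanish; so `T - 1` is injective and `J` is also a left
inverse.
-/

open Filter Topology Function

section Geometric

variable {E : Type*} [SeminormedAddCommGroup E] [CompleteSpace E] {f : ℕ → E} {C r : ℝ}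

theorem summable_of_norm_le_mul_pow (hr : r < 1) (hf : ∀ n, ‖f n‖ ≤ C * r ^ n) : Summable f :=
  summable_iff_cauchySeq_finset.2 (cauchySeq_finset_of_geometric_bound hr hf)

theorem norm_tsum_le_of_norm_le_mul_pow (hr : r < 1) (hf : ∀ n, ‖f n‖ ≤ C * r ^ n) :
    ‖∑' n, f n‖ ≤ C / (1 - r) := by
  simpa using norm_sub_le_of_geometric_bound_of_hasSum hr hf
    (summable_of_norm_le_mul_pow hr hf).hasSum 0

end Geometric

theorem eq_zero_of_norm_le_mul_pow_mul_norm {E : Type*} [NormedAddCommGroup E] {x : E}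
    {C r : ℝ} (hr₀ : 0 ≤ r) (hr₁ : r < 1) (h : ∀ n : ℕ, ‖x‖ ≤ C * r ^ n * ‖x‖) : x = 0 := by
  have hlim : Tendsto (fun n : ℕ => C * r ^ n * ‖x‖) atTop (𝓝 0) := by
    simpa using ((tendsto_pow_atTop_nhds_zero_of_lt_one hr₀ hr₁).const_mul C).mul_const ‖x‖
  exact norm_le_zero_iff.1 (ge_of_tendsto' hlim h)

theorem ContinuousLinearMap.eq_zero_of_isFixedPt {𝕜 E : Type*} [NormedAddCommGroup E]
    [NontriviallyNormedField 𝕜] [NormedSpace 𝕜 E] {T : E →L[𝕜] E} {x : E} {C r : ℝ}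
    (hx : IsFixedPt T x) (hr₀ : 0 ≤ r) (hr₁ : r < 1)
    (h : ∀ n : ℕ, ‖(T ^ n) x‖ ≤ C * r ^ n * ‖x‖) : x = 0 := by
  refine eq_zero_of_norm_le_mul_pow_mul_norm (C := C) hr₀ hr₁ fun n => ?_
  simpa only [FunLike.coe_pow_eq_iterate, (hx.iterate n).eq] using h n

section Telescoping

variable {R M : Type*} [Semiring R] [AddCommGroup M] [Module R M] [TopologicalSpace M]
  [T2Space M] [ContinuousAdd M] {T : M →L[R] M} {u : ℕ → M}

theorem ContinuousLinearMap.map_tsum_of_map_eq_succ (hu : Summable u)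
    (h : ∀ n, T (u n) = u (n + 1)) : T (∑' n, u n) = ∑' n, u n - u 0 := by
  have hshift : Summable fun n => u (n + 1) := by simpa only [h] using hu.mapL T
  rw [T.map_tsum hu, tsum_eq_zero_add' hshift, add_sub_cancel_left]
  simp only [h]

theorem ContinuousLinearMap.map_tsum_succ_of_map_succ_eq (hu : Summable fun n => u (n + 1))
    (h : ∀ n, T (u (n + 1)) = u n) : T (∑' n, u (n + 1)) = u 0 + ∑' n, u (n + 1) := by
  rw [T.map_tsum hu]
  simp only [h]
  exact tsum_eq_zero_add' hu

end Telescoping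

theorem LinearMap.apply_map_comm_of_invariant {R M : Type*} [Semiring R] [AddCommGroup M]
    [Module R M] {P Q T : M →ₗ[R] M} {F G : Submodule R M} (hPQ : ∀ v, P v + Q v = v)
    (hP : ∀ v, P v ∈ F) (hQ : ∀ v, Q v ∈ G) (hPG : ∀ v ∈ G, P v = 0) (hQF : ∀ v ∈ F, Q v = 0)
    (hTF : ∀ v ∈ F, T v ∈ F) (hTG : ∀ v ∈ G, T v ∈ G) (v : M) : P (T v) = T (P v) := by
  have hPF : ∀ u ∈ F, P u = u := fun u hu => by simpa [hQF u hu] using hPQ u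
  conv_lhs => rw [← hPQ v]
  rw [map_add, map_add, hPF _ (hTF _ (hP v)), hPG _ (hTG _ (hQ v)), add_zero]

section HyperbolicSplitting

open ContinuousLinearMap

variable {E : Type*} [NormedAddCommGroup E] [NormedSpace ℝ E] {T πF πG : E →L[ℝ] E}
  {F G : Submodule ℝ E} {TG S : G →L[ℝ] G} {D lam : ℝ}

noncomputable def hyperbolicInverse (T πF πG : E →L[ℝ] E) (G : Submodule ℝ E)
    (hπG : ∀ v, πG v ∈ G) (S : G →L[ℝ] G) : E →L[ℝ] E :=
  -(∑' n, (T ^ n) ∘L πF) + ∑' n, G.subtypeL ∘L (S ^ (n + 1)) ∘L πG.codRestrict G hπG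

theorem norm_pow_comp_le (hπF : ∀ v, πF v ∈ F) (hD : 0 ≤ D) (hlam : 0 ≤ lam)
    (hF : ∀ v ∈ F, ∀ n : ℕ, ‖(T ^ n) v‖ ≤ D * lam ^ n * ‖v‖) (n : ℕ) :
    ‖(T ^ n) ∘L πF‖ ≤ D * ‖πF‖ * lam ^ n := by
  refine opNorm_le_bound _ (by positivity) fun v => ?_
  calc ‖(T ^ n) (πF v)‖ ≤ D * lam ^ n * ‖πF v‖ := hF _ (hπF v) n
    _ ≤ D * lam ^ n * (‖πF‖ * ‖v‖) := by gcongr; exact πF.le_opNorm v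
    _ = D * ‖πF‖ * lam ^ n * ‖v‖ := by ring

theorem norm_subtypeL_comp_pow_succ_comp_le (hπG : ∀ v, πG v ∈ G) (hD : 0 ≤ D) (hlam₀ : 0 ≤ lam)
    (hlam₁ : lam ≤ 1) (hG : ∀ (v : G) (n : ℕ), ‖((S ^ n) v : E)‖ ≤ D * lam ^ n * ‖(v : E)‖)
    (n : ℕ) : ‖G.subtypeL ∘L (S ^ (n + 1)) ∘L πG.codRestrict G hπG‖ ≤ D * ‖πG‖ * lam ^ n := by
  refine opNorm_le_bound _ (by positivity) fun v => ?_
  calc ‖((S ^ (n + 1)) ⟨πG v, hπG v⟩ : E)‖ ≤ D * lam ^ (n + 1) * ‖πG v‖ := hG _ _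
    _ ≤ D * lam ^ n * (‖πG‖ * ‖v‖) :=
      mul_le_mul (mul_le_mul_of_nonneg_left (pow_le_pow_of_le_one hlam₀ hlam₁ n.le_succ) hD)
        (πG.le_opNorm v) (norm_nonneg _) (by positivity)
    _ = D * ‖πG‖ * lam ^ n * ‖v‖ := by ring

theorem hyperbolicInverse_apply (hπG : ∀ v, πG v ∈ G) (hA : Summable fun n => (T ^ n) ∘L πF)
    (hB : Summable fun n => G.subtypeL ∘L (S ^ (n + 1)) ∘L πG.codRestrict G hπG) (v : E) :
    hyperbolicInverse T πF πG G hπG S v =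
      -(∑' n, (T ^ n) (πF v)) + ∑' n, ((S ^ (n + 1)) ⟨πG v, hπG v⟩ : E) := by
  rw [hyperbolicInverse, add_apply, neg_apply]
  exact congr_arg₂ (fun a b => -a + b) ((apply ℝ E v).map_tsum hA) ((apply ℝ E v).map_tsum hB)

theorem norm_hyperbolicInverse_le [CompleteSpace E] (hπF : ∀ v, πF v ∈ F) (hπG : ∀ v, πG v ∈ G)
    (hD : 0 ≤ D) (hlam₀ : 0 ≤ lam) (hlam₁ : lam < 1)
    (hF : ∀ v ∈ F, ∀ n : ℕ, ‖(T ^ n) v‖ ≤ D * lam ^ n * ‖v‖)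
    (hG : ∀ (v : G) (n : ℕ), ‖((S ^ n) v : E)‖ ≤ D * lam ^ n * ‖(v : E)‖) :
    ‖hyperbolicInverse T πF πG G hπG S‖ ≤ 2 * max ‖πF‖ ‖πG‖ * D / (1 - lam) := by
  have hA := norm_tsum_le_of_norm_le_mul_pow hlam₁ (norm_pow_comp_le hπF hD hlam₀ hF)
  have hB := norm_tsum_le_of_norm_le_mul_pow hlam₁
    (norm_subtypeL_comp_pow_succ_comp_le hπG hD hlam₀ hlam₁.le hG)
  have hlam : 0 < 1 - lam := sub_pos.2 hlam₁
  calc ‖hyperbolicInverse T πF πG G hπG S‖ ≤ D * ‖πF‖ / (1 - lam) + D * ‖πG‖ / (1 - lam) :=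
        (norm_add_le _ _).trans (by rw [norm_neg]; gcongr)
    _ ≤ 2 * max ‖πF‖ ‖πG‖ * D / (1 - lam) := by
      rw [← add_div]
      gcongr
      nlinarith [le_max_left ‖πF‖ ‖πG‖, le_max_right ‖πF‖ ‖πG‖]

theorem sub_id_apply_hyperbolicInverse (hπ : ∀ v, πF v + πG v = v) (hπG : ∀ v, πG v ∈ G)
    (hTG : ∀ v : G, (TG v : E) = T v) (hTS : RightInverse S TG)
    (hA : Summable fun n => (T ^ n) ∘L πF)
    (hB : Summable fun n => G.subtypeL ∘L (S ^ (n + 1)) ∘L πG.codRestrict G hπG) (v : E) :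
    (T - ContinuousLinearMap.id ℝ E) (hyperbolicInverse T πF πG G hπG S v) = v := by
  set w : G := ⟨πG v, hπG v⟩
  have hTA : T (∑' n, (T ^ n) (πF v)) = ∑' n, (T ^ n) (πF v) - πF v := by
    simpa using T.map_tsum_of_map_eq_succ (u := fun n => (T ^ n) (πF v))
      (hA.mapL (apply ℝ E v)) fun n => by rw [pow_succ', mul_apply_eq_comp]
  have hTB : T (∑' n, ((S ^ (n + 1)) w : E)) = πG v + ∑' n, ((S ^ (n + 1)) w : E) :=
    T.map_tsum_succ_of_map_succ_eq (u := fun n => ((S ^ n) w : E)) (hB.mapL (apply ℝ E v))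
      fun n => by rw [pow_succ', mul_apply_eq_comp, ← hTG, hTS]
  rw [hyperbolicInverse_apply hπG hA hB, sub_apply, coe_id', id_eq, map_add, map_neg, hTA, hTB]
  convert hπ v using 1
  abel

theorem sub_id_injective (hπ : ∀ v, πF v + πG v = v) (hπF : ∀ v, πF v ∈ F)
    (hπG : ∀ v, πG v ∈ G) (hπFG : ∀ v ∈ G, πF v = 0) (hπGF : ∀ v ∈ F, πG v = 0)
    (hTF : ∀ v ∈ F, T v ∈ F) (hTG : ∀ v ∈ G, T v ∈ G) (hTGeq : ∀ v : G, (TG v : E) = T v)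
    (hST : LeftInverse S TG) (hlam₀ : 0 ≤ lam) (hlam₁ : lam < 1)
    (hF : ∀ v ∈ F, ∀ n : ℕ, ‖(T ^ n) v‖ ≤ D * lam ^ n * ‖v‖)
    (hG : ∀ (v : G) (n : ℕ), ‖((S ^ n) v : E)‖ ≤ D * lam ^ n * ‖(v : E)‖) :
    Injective (T - ContinuousLinearMap.id ℝ E) := by
  refine (injective_iff_map_eq_zero _).2 fun v hv => ?_
  have hTv : T v = v := sub_eq_zero.1 hv
  have hcommF : πF (T v) = T (πF v) :=
    LinearMap.apply_map_comm_of_invariant (P := (πF : E →ₗ[ℝ] E)) (Q := πG) (T := T)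
      hπ hπF hπG hπFG hπGF hTF hTG v
  have hcommG : πG (T v) = T (πG v) :=
    LinearMap.apply_map_comm_of_invariant (P := (πG : E →ₗ[ℝ] E)) (Q := πF) (T := T)
      (fun u => (add_comm _ _).trans (hπ u)) hπG hπF hπGF hπFG hTG hTF v
  have hFfix : IsFixedPt T (πF v) := hcommF.symm.trans (congrArg πF hTv)
  have hGfix : IsFixedPt TG ⟨πG v, hπG v⟩ :=
    Subtype.ext <| (hTGeq _).trans <| hcommG.symm.trans (congrArg πG hTv)
  have hπFv : πF v = 0 := T.eq_zero_of_isFixedPt hFfix hlam₀ hlam₁ (hF _ (hπF v))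
  have hπGv : πG v = 0 :=
    congrArg Subtype.val (S.eq_zero_of_isFixedPt (hGfix.to_leftInverse hST) hlam₀ hlam₁ (hG _))
  rw [← hπ v, hπFv, hπGv, add_zero]

end HyperbolicSplitting

theorem right_inverse_of_hyperbolic_minus_id_general
    {E : Type*} [NormedAddCommGroup E] [NormedSpace ℝ E] [CompleteSpace E]
    (T : E →L[ℝ] E) (F G : Submodule ℝ E)
    (πF πG : E →L[ℝ] E)
    (hsum : πF + πG = ContinuousLinearMap.id ℝ E)
    (hπFr : Set.range πF = (F : Set E)) (hπFk : {v : E | πF v = 0} = (G : Set E))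
    (hπGk : {v : E | πG v = 0} = (F : Set E))
    (hπGmem : ∀ v : E, πG v ∈ G)
    (hTF : ∀ v ∈ F, T v ∈ F)
    (hTG : ∀ v ∈ G, T v ∈ G)
    (TG : G →L[ℝ] G) (hTGeq : ∀ v : G, (TG v : E) = T v)
    (S : G →L[ℝ] G) (hST : Function.LeftInverse S TG) (hTS : Function.RightInverse S TG)
    (D lam : ℝ) (hD : 0 < D) (hlam0 : 0 < lam) (hlam1 : lam < 1)
    (hFbound : ∀ v ∈ F, ∀ n : ℕ, ‖(T ^ n) v‖ ≤ D * lam ^ n * ‖v‖)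
    (hGbound : ∀ (v : G) (n : ℕ), ‖((S ^ n) v : E)‖ ≤ D * lam ^ n * ‖(v : E)‖) :
    ∃ J : E →L[ℝ] E,
      (∀ v : E, Summable fun n : ℕ => (T ^ n) (πF v)) ∧
      (∀ v : E, Summable fun n : ℕ => ((S ^ (n + 1)) (⟨πG v, hπGmem v⟩ : G) : E)) ∧
      (∀ v : E, J v =
        -(∑' n : ℕ, (T ^ n) (πF v)) + ∑' n : ℕ, ((S ^ (n + 1)) (⟨πG v, hπGmem v⟩ : G) : E)) ∧
      (∀ v : E, (T - ContinuousLinearMap.id ℝ E) (J v) = v) ∧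
      (∀ v : E, J ((T - ContinuousLinearMap.id ℝ E) v) = v) ∧
      (∃ Teq : E ≃L[ℝ] E, ∀ v : E, Teq v = T v - v) ∧
      ‖J‖ ≤ 2 * max ‖πF‖ ‖πG‖ * D / (1 - lam) := by
  have hπ : ∀ v, πF v + πG v = v := fun v => by simpa using DFunLike.congr_fun hsum v
  have hπF : ∀ v, πF v ∈ F := fun v => hπFr.subset (Set.mem_range_self v)
  have hπFG : ∀ v ∈ G, πF v = 0 := fun v hv => (Set.ext_iff.1 hπFk v).2 hv
  have hπGF : ∀ v ∈ F, πG v = 0 := fun v hv => (Set.ext_iff.1 hπGk v).2 hv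
  have hA := summable_of_norm_le_mul_pow hlam1 (norm_pow_comp_le hπF hD.le hlam0.le hFbound)
  have hB := summable_of_norm_le_mul_pow hlam1
    (norm_subtypeL_comp_pow_succ_comp_le hπGmem hD.le hlam0.le hlam1.le hGbound)
  set J := hyperbolicInverse T πF πG G hπGmem S
  have hright : RightInverse J (T - ContinuousLinearMap.id ℝ E) :=
    sub_id_apply_hyperbolicInverse hπ hπGmem hTGeq hTS hA hB
  have hleft : LeftInverse J (T - ContinuousLinearMap.id ℝ E) :=
    hright.leftInverse_of_injective <| sub_id_injective hπ hπF hπGmem hπFG hπGF hTF hTG hTGeq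
      hST hlam0.le hlam1 hFbound hGbound
  exact ⟨J, fun v => hA.mapL (ContinuousLinearMap.apply ℝ E v),
    fun v => hB.mapL (ContinuousLinearMap.apply ℝ E v), hyperbolicInverse_apply hπGmem hA hB,
    hright, hleft, ⟨.equivOfInverse (T - ContinuousLinearMap.id ℝ E) J hleft hright, fun _ => rfl⟩,
    norm_hyperbolicInverse_le hπF hπGmem hD.le hlam0.le hlam1 hFbound hGbound⟩

/-- Let `E` be a real Banach space, `T : E → E` continuous linear, and
`E = F ⊕ G` a splitting into closed subspaces with continuous projections `πF, πG`
(`πF + πG = id`, with the indicated ranges and kernels), such that `T` preserves `F` and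
`G`, the restriction `T|_G` (given as `TG`, with inverse `S`) is bijective, and
`‖Tⁿ v‖ ≤ D λⁿ ‖v‖` on `F`, `‖(T|_G)⁻ⁿ v‖ ≤ D λⁿ ‖v‖` on `G`.  Then
`J v := − Σ_{n ≥ 0} Tⁿ(πF v) + Σ_{n ≥ 1} (T|_G)⁻ⁿ(πG v)` is a well-defined continuous
linear map, a two-sided inverse of `T − id` (so `T − id` is a continuous linear
equivalence), and `‖J‖ ≤ 2 C D / (1 − λ)` with `C = max(‖πF‖, ‖πG‖)`. -/
theorem right_inverse_of_hyperbolic_minus_id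
    {E : Type*} [NormedAddCommGroup E] [NormedSpace ℝ E] [CompleteSpace E]
    (T : E →L[ℝ] E) (F G : Submodule ℝ E)
    (hFc : IsClosed (F : Set E)) (hGc : IsClosed (G : Set E))
    (πF πG : E →L[ℝ] E)
    (hsum : πF + πG = ContinuousLinearMap.id ℝ E)
    (hπFr : Set.range πF = (F : Set E)) (hπFk : {v : E | πF v = 0} = (G : Set E))
    (hπGr : Set.range πG = (G : Set E)) (hπGk : {v : E | πG v = 0} = (F : Set E))
    (hπGmem : ∀ v : E, πG v ∈ G)
    (hTF : ∀ v ∈ F, T v ∈ F)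
    (hTG : ∀ v ∈ G, T v ∈ G)
    (TG : G →L[ℝ] G) (hTGeq : ∀ v : G, (TG v : E) = T v)
    (S : G →L[ℝ] G) (hST : Function.LeftInverse S TG) (hTS : Function.RightInverse S TG)
    (D lam : ℝ) (hD : 0 < D) (hlam0 : 0 < lam) (hlam1 : lam < 1)
    (hFbound : ∀ v ∈ F, ∀ n : ℕ, ‖(T ^ n) v‖ ≤ D * lam ^ n * ‖v‖)
    (hGbound : ∀ (v : G) (n : ℕ), ‖((S ^ n) v : E)‖ ≤ D * lam ^ n * ‖(v : E)‖) :
    ∃ J : E →L[ℝ] E,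
      (∀ v : E, Summable fun n : ℕ => (T ^ n) (πF v)) ∧
      (∀ v : E, Summable fun n : ℕ => ((S ^ (n + 1)) (⟨πG v, hπGmem v⟩ : G) : E)) ∧
      (∀ v : E, J v =
        -(∑' n : ℕ, (T ^ n) (πF v)) + ∑' n : ℕ, ((S ^ (n + 1)) (⟨πG v, hπGmem v⟩ : G) : E)) ∧
      (∀ v : E, (T - ContinuousLinearMap.id ℝ E) (J v) = v) ∧
      (∀ v : E, J ((T - ContinuousLinearMap.id ℝ E) v) = v) ∧
      (∃ Teq : E ≃L[ℝ] E, ∀ v : E, Teq v = T v - v) ∧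
      ‖J‖ ≤ 2 * max ‖πF‖ ‖πG‖ * D / (1 - lam) :=
  right_inverse_of_hyperbolic_minus_id_general T F G πF πG hsum hπFr hπFk hπGk hπGmem hTF hTG TG
    hTGeq S hST hTS D lam hD hlam0 hlam1 hFbound hGbound
end
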